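/- If [𝔇_j, 𝔭𝔯_Q] = 0 for all j = 1,...,p, then Q ∈ B^q is a generalized symmetry of the passive orthonomic system, i.e. 𝔇_{J^α} Q^{i^α} = 𝔭𝔯_Q P^α for all α = 1,...,n. -/

import Mathlib

open MvPolynomial

/-- Jet variables: the independent variables `x i` and the derivatives `u^α_K`. -/
abbrev JetVar (p q : ℕ) := Sum (Fin p) (Fin q × (Fin p →₀ ℕ))

/-- The ring `A` of differential (polynomial) functions on the jet manifold. -/
abbrev JetRing (p q : ℕ) := MvPolynomial (JetVar p q) ℚ

/-- The total differential operator `D_i = ∂/∂x_i + Σ_{α,K} u^α_{Ki} ∂/∂u^α_K`. -/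
noncomputable def totalD (p q : ℕ) (i : Fin p) :
    Derivation ℚ (JetRing p q) (JetRing p q) :=
  MvPolynomial.mkDerivation ℚ (fun v => match v with
    | Sum.inl j => if i = j then 1 else 0
    | Sum.inr (α, K) => X (Sum.inr (α, K + Finsupp.single i 1)))

/-- The multi total differential operator `D_K = D_1^{K_1} ∘ ⋯ ∘ D_p^{K_p}`. -/
noncomputable def DmultiK (p q : ℕ) (K : Fin p →₀ ℕ) :
    Module.End ℚ (JetRing p q) :=
  (List.finRange p).foldr (fun i f => ((totalD p q i).toLinearMap ^ (K i)) * f) 1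

/-- A system of PDEs `u^{i^α}_{J^α} = P^α` together with a ranking `rk` on
`ℕ_q × ℕ^p`: a total order which is positive and compatible with addition,
and with all `J^α ≠ 0`. -/
structure OrthoSystem (p q n : ℕ) where
  ii : Fin n → Fin q
  JJ : Fin n → (Fin p →₀ ℕ)
  P : Fin n → JetRing p q
  rk : (Fin q × (Fin p →₀ ℕ)) → (Fin q × (Fin p →₀ ℕ)) → Prop
  rk_refl : ∀ a, rk a a
  rk_total : ∀ a b, rk a b ∨ rk b a
  rk_antisymm : ∀ a b, rk a b → rk b a → a = b
  rk_trans : ∀ a b c, rk a b → rk b c → rk a c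
  rk_pos : ∀ (j : Fin q) (K L : Fin p →₀ ℕ), rk (j, K) (j, K + L)
  rk_compat : ∀ (i j : Fin q) (J K L : Fin p →₀ ℕ),
    rk (i, J) (j, K) ↔ rk (i, J + L) (j, K + L)
  J_ne : ∀ α, JJ α ≠ 0

variable {p q n : ℕ}

/-- The strict part of the ranking. -/
def OrthoSystem.rlt (S : OrthoSystem p q n) (a b : Fin q × (Fin p →₀ ℕ)) : Prop :=
  S.rk a b ∧ a ≠ b

/-- A derivative `u^j_K` is principal if `(j,K) = (i^α, J^α L)` for some `α, L`. -/
def OrthoSystem.principal (S : OrthoSystem p q n) (v : Fin q × (Fin p →₀ ℕ)) : Prop :=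
  ∃ (α : Fin n) (L : Fin p →₀ ℕ), v = (S.ii α, S.JJ α + L)

/-- `Q` belongs to the subring `B` of functions of parametric derivatives only. -/
def OrthoSystem.inB (S : OrthoSystem p q n) (Q : JetRing p q) : Prop :=
  ∀ (jK : Fin q × (Fin p →₀ ℕ)), Sum.inr jK ∈ Q.vars → ¬ S.principal jK

/-- Orthonomy: `P^α` depends only on parametric derivatives `u^j_K` with
`(j,K) < (i^α, J^α)`. -/
def OrthoSystem.orthonomic (S : OrthoSystem p q n) : Prop :=
  ∀ (α : Fin n) (jK : Fin q × (Fin p →₀ ℕ)), Sum.inr jK ∈ (S.P α).vars →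
    ¬ S.principal jK ∧ S.rlt jK (S.ii α, S.JJ α)

/-- Passivity: `(i^α, J^α K) = (i^β, J^β L)` implies `D_K P^α = D_L P^β`. -/
def OrthoSystem.passive (S : OrthoSystem p q n) : Prop :=
  ∀ (α β : Fin n) (K L : Fin p →₀ ℕ),
    (S.ii α, S.JJ α + K) = (S.ii β, S.JJ β + L) →
    DmultiK p q K (S.P α) = DmultiK p q L (S.P β)

/-- The differential ideal generated by the `Δ^α = u^{i^α}_{J^α} − P^α`. -/
noncomputable def OrthoSystem.diffIdeal (S : OrthoSystem p q n) : Ideal (JetRing p q) :=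
  Ideal.span { x | ∃ (α : Fin n) (L : Fin p →₀ ℕ),
    x = DmultiK p q L (X (Sum.inr (S.ii α, S.JJ α)) - S.P α) }

open Classical in
/-- The reduction `Q ↦ Q̃`: the element of `B` congruent to `Q` modulo the
differential ideal generated by `Δ` (when it exists). -/
noncomputable def OrthoSystem.red (S : OrthoSystem p q n) (Q : JetRing p q) :
    JetRing p q :=
  if h : ∃ R, S.inB R ∧ Q - R ∈ S.diffIdeal then h.choose else 0

/-- The intrinsic multi-differential operator `𝔇_K P = (D_K P)~`. -/
noncomputable def OrthoSystem.dfrakK (S : OrthoSystem p q n) (K : Fin p →₀ ℕ)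
    (Q : JetRing p q) : JetRing p q :=
  S.red (DmultiK p q K Q)

/-- The intrinsic total differential operator `𝔇_j P = (D_j P)~`. -/
noncomputable def OrthoSystem.dfrak (S : OrthoSystem p q n) (j : Fin p)
    (Q : JetRing p q) : JetRing p q :=
  S.red (totalD p q j Q)

open Classical in
/-- The intrinsic prolongation `𝔭𝔯_Q = Σ_{(j,K)∈S} (𝔇_K Q^j) ∂/∂u^j_K`. -/
noncomputable def OrthoSystem.iprolong (S : OrthoSystem p q n)
    (Q : Fin q → JetRing p q) : Derivation ℚ (JetRing p q) (JetRing p q) :=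
  MvPolynomial.mkDerivation ℚ (fun v => match v with
    | Sum.inl _ => 0
    | Sum.inr (j, K) => if S.principal (j, K) then 0 else S.dfrakK K (Q j))


/-!
Orthonomy and passivity make the substitution of every principal derivative by its expression in
parametric ones well defined (well-founded recursion along the ranking, which is well-founded by
Dickson's lemma). This substitution is an algebra endomorphism with values in `B`, fixing `B`,
killing the differential ideal and congruent to the identity modulo it, so it computes the
reduction `Q ↦ Q̃`, and reduction commutes with `D_i` up to reduction. Using `[𝔇_i, 𝔭𝔯_Q] = 0`,
induction on `K` gives `𝔭𝔯_Q ũ^j_K = 𝔇_K Q^j`; for `(j, K) = (i^α, J^α)` the left side is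
`𝔭𝔯_Q P^α`.
-/

namespace MvPolynomial

variable {R A σ : Type*}

section CommSemiring

variable [CommSemiring R] [CommSemiring A] [Algebra R A] {s : Set σ} {P : MvPolynomial σ R}

theorem aeval_eqOn_of_mem_supported {f g : σ → A} (hP : P ∈ supported R s)
    (hfg : Set.EqOn f g s) : aeval f P = aeval g P := by
  rw [supported_eq_range_rename] at hP
  obtain ⟨P, rfl⟩ := (AlgHom.mem_range _).1 hP
  rw [aeval_rename, aeval_rename]
  exact congrArg (aeval · P) (_root_.funext fun v : s => hfg v.2)

theorem aeval_mem_of_mem_supported {f : σ → A} {T : Subalgebra R A} (hP : P ∈ supported R s)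
    (hf : ∀ v ∈ s, f v ∈ T) : aeval f P ∈ T := by
  rw [supported_eq_range_rename] at hP
  obtain ⟨P, rfl⟩ := (AlgHom.mem_range _).1 hP
  rw [aeval_rename]
  have hP : aeval (f ∘ Subtype.val) P ∈ Algebra.adjoin R (Set.range (f ∘ Subtype.val)) :=
    aeval_range (R := R) (f ∘ Subtype.val) ▸ AlgHom.mem_range_self _ P
  exact Algebra.adjoin_le (Set.range_subset_iff.2 fun v : s => hf v v.2) hP

theorem _root_.Derivation.map_mem_of_mem_supported
    (D : Derivation R (MvPolynomial σ R) (MvPolynomial σ R)) {T : Subalgebra R (MvPolynomial σ R)}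
    (hsT : supported R s ≤ T) (hD : ∀ v ∈ s, D (X v) ∈ T) (hP : P ∈ supported R s) :
    D P ∈ T := by
  induction hP using Algebra.adjoin_induction with
  | mem x hx =>
    obtain ⟨v, hv, rfl⟩ := hx
    exact hD v hv
  | algebraMap r => rw [D.map_algebraMap]; exact zero_mem T
  | add x y _ _ hx hy => rw [map_add]; exact add_mem hx hy
  | mul x y hx' hy' hx hy =>
    rw [D.leibniz, smul_eq_mul, smul_eq_mul]
    exact add_mem (mul_mem (hsT hx') hy) (mul_mem (hsT hy') hx)

end CommSemiring

theorem sub_aeval_mem_of_mem_supported [CommRing R] {s : Set σ} {P : MvPolynomial σ R}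
    {I : Ideal (MvPolynomial σ R)} {f : σ → MvPolynomial σ R} (hP : P ∈ supported R s)
    (hf : ∀ v ∈ s, X v - f v ∈ I) : P - aeval f P ∈ I := by
  rw [← Ideal.Quotient.mk_eq_mk_iff_sub_mem]
  have h := aeval_eqOn_of_mem_supported (f := fun v => Ideal.Quotient.mkₐ R I (X v))
    (g := fun v => Ideal.Quotient.mkₐ R I (f v)) hP
    fun v hv => (Ideal.Quotient.mk_eq_mk_iff_sub_mem _ _).2 (hf v hv)
  rwa [← comp_aeval_apply, ← comp_aeval_apply, aeval_X_left_apply] at h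

end MvPolynomial

theorem Finsupp.induction_single_one {ι : Type*} {motive : (ι →₀ ℕ) → Prop} (K : ι →₀ ℕ)
    (zero : motive 0) (add_single : ∀ K i, motive K → motive (K + single i 1)) : motive K := by
  induction K using Finsupp.induction with
  | zero => exact zero
  | single_add i b K _ hb ih =>
    clear hb
    induction b with
    | zero => rwa [single_zero, zero_add]
    | succ b ihb =>
      rw [single_add, add_right_comm]
      exact add_single _ i ihb

theorem List.prod_map_pow_add_single {M ι : Type*} [Monoid M] (T : ι → M) (K : ι →₀ ℕ) {i : ι}
    (hT : ∀ j, Commute (T i) (T j)) {l : List ι} (hl : l.Nodup) (hi : i ∈ l) :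
    (l.map fun j => T j ^ (K + Finsupp.single i 1 : ι →₀ ℕ) j).prod
      = T i * (l.map fun j => T j ^ K j).prod := by
  induction l with
  | nil => cases hi
  | cons a l ih =>
    obtain ⟨ha, hl⟩ := List.nodup_cons.1 hl
    rw [List.map_cons, List.map_cons, List.prod_cons, List.prod_cons]
    rcases eq_or_ne a i with rfl | hai
    · have htail : ∀ j ∈ l, (K + Finsupp.single a 1 : ι →₀ ℕ) j = K j := fun j hj => by
        rw [Finsupp.add_apply, Finsupp.single_eq_of_ne (ne_of_mem_of_not_mem hj ha), add_zero]
      rw [List.map_congr_left fun j hj => by rw [htail j hj], Finsupp.add_apply,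
        Finsupp.single_eq_same, pow_succ', mul_assoc]
    · rw [Finsupp.add_apply, Finsupp.single_eq_of_ne hai, add_zero,
        ih hl ((List.mem_cons.1 hi).resolve_left hai.symm), ← mul_assoc,
        ((hT a).pow_right (K a)).eq.symm, mul_assoc]

theorem totalD_X_inl (i k : Fin p) :
    totalD p q i (X (Sum.inl k)) = if i = k then 1 else 0 :=
  mkDerivation_X _ _ _

theorem totalD_X_inr (i : Fin p) (j : Fin q) (K : Fin p →₀ ℕ) :
    totalD p q i (X (Sum.inr (j, K))) = X (Sum.inr (j, K + Finsupp.single i 1)) :=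
  mkDerivation_X _ _ _

theorem commute_totalD (i k : Fin p) :
    Commute (totalD p q i).toLinearMap (totalD p q k).toLinearMap := by
  have h : ⁅totalD p q i, totalD p q k⁆ = 0 := by
    refine derivation_ext fun v => ?_
    rw [Derivation.commutator_apply]
    rcases v with l | ⟨j, K⟩
    · rw [totalD_X_inl, totalD_X_inl]
      split_ifs <;> simp
    · simp only [totalD_X_inr, add_right_comm K]
      simp
  refine LinearMap.ext fun Y => sub_eq_zero.1 ?_
  simpa [Derivation.commutator_apply] using congrArg (· Y) h

theorem DmultiK_eq_prod (K : Fin p →₀ ℕ) :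
    DmultiK p q K = ((List.finRange p).map fun i => (totalD p q i).toLinearMap ^ K i).prod := by
  rw [DmultiK, List.prod_eq_foldr, List.foldr_map]

theorem DmultiK_zero_apply (Y : JetRing p q) : DmultiK p q 0 Y = Y := by
  simp [DmultiK_eq_prod]

theorem DmultiK_add_single_apply (K : Fin p →₀ ℕ) (i : Fin p) (Y : JetRing p q) :
    DmultiK p q (K + Finsupp.single i 1) Y = totalD p q i (DmultiK p q K Y) := by
  rw [DmultiK_eq_prod, DmultiK_eq_prod, List.prod_map_pow_add_single _ _ (commute_totalD i)
    (List.nodup_finRange p) (List.mem_finRange i)]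
  rfl

theorem DmultiK_X_inr (K : Fin p →₀ ℕ) (j : Fin q) (M : Fin p →₀ ℕ) :
    DmultiK p q K (X (Sum.inr (j, M))) = X (Sum.inr (j, M + K)) := by
  induction K using Finsupp.induction_single_one with
  | zero => rw [DmultiK_zero_apply, add_zero]
  | add_single K i ih => rw [DmultiK_add_single_apply, ih, totalD_X_inr, add_assoc]

namespace OrthoSystem

variable (S : OrthoSystem p q n)

theorem rlt_of_rlt_of_rk {a b c : Fin q × (Fin p →₀ ℕ)} (hab : S.rlt a b) (hbc : S.rk b c) :
    S.rlt a c :=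
  ⟨S.rk_trans _ _ _ hab.1 hbc, by rintro rfl; exact hab.2 (S.rk_antisymm _ _ hab.1 hbc)⟩

theorem rlt_add_right {j k : Fin q} {K M : Fin p →₀ ℕ} (h : S.rlt (j, K) (k, M))
    (L : Fin p →₀ ℕ) : S.rlt (j, K + L) (k, M + L) :=
  ⟨(S.rk_compat j k K M L).1 h.1, fun heq => h.2 <| by
    rw [Prod.mk.injEq, add_left_inj, ← Prod.mk.injEq] at heq
    exact heq⟩

theorem rlt_wellFounded : WellFounded S.rlt := by
  have hwqo : WellQuasiOrdered fun a b : Fin q × (Fin p →₀ ℕ) => a.1 = b.1 ∧ a.2 ≤ b.2 :=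
    (Finite.wellQuasiOrdered _).prod wellQuasiOrdered_le
  have : IsStrictOrder _ S.rlt :=
    { irrefl := fun _ h => h.2 rfl, trans := fun _ _ _ hab hbc => S.rlt_of_rlt_of_rk hab hbc.1 }
  refine RelEmbedding.wellFounded_iff_isEmpty.2 ⟨fun g => ?_⟩
  obtain ⟨m, n, hmn, hj, hK⟩ := hwqo g
  obtain ⟨L, hL⟩ := le_iff_exists_add.1 hK
  have hrk : S.rk (g m) (g n) := by
    rw [← Prod.mk.eta (p := g n), ← hj, hL]
    exact S.rk_pos _ _ L
  have hlt : S.rlt (g n) (g m) := g.map_rel_iff.2 hmn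
  exact hlt.2 (S.rk_antisymm _ _ hlt.1 hrk)

def parametric : Set (JetVar p q) :=
  {v | ∀ u, v = Sum.inr u → ¬ S.principal u}

def varsBelow (b : Fin q × (Fin p →₀ ℕ)) : Set (JetVar p q) :=
  {v | ∀ u, v = Sum.inr u → S.rlt u b}

theorem inB_iff_mem_supported {R : JetRing p q} : S.inB R ↔ R ∈ supported ℚ S.parametric := by
  rw [mem_supported]
  exact ⟨fun h v hv u huv => h u (huv ▸ hv), fun h u hu => h hu u rfl⟩

theorem totalD_mem_supported_varsBelow (i : Fin p) {j : Fin q} {K : Fin p →₀ ℕ}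
    {Y : JetRing p q} (hY : Y ∈ supported ℚ (S.varsBelow (j, K))) :
    totalD p q i Y ∈ supported ℚ (S.varsBelow (j, K + Finsupp.single i 1)) := by
  have hle : supported ℚ (S.varsBelow (j, K))
      ≤ supported ℚ (S.varsBelow (j, K + Finsupp.single i 1)) :=
    supported_mono fun v hv u hvu => S.rlt_of_rlt_of_rk (hv u hvu) (S.rk_pos _ _ _)
  refine Derivation.map_mem_of_mem_supported _ hle (fun v hv => ?_) hY
  rcases v with k | ⟨k, M⟩
  · rw [totalD_X_inl]
    split_ifs
    exacts [one_mem _, zero_mem _]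
  · rw [totalD_X_inr]
    exact X_mem_supported.2 fun u hu => Sum.inr_injective hu ▸ S.rlt_add_right (hv _ rfl) _

theorem DmultiK_mem_supported_varsBelow (L : Fin p →₀ ℕ) {j : Fin q} {K : Fin p →₀ ℕ}
    {Y : JetRing p q} (hY : Y ∈ supported ℚ (S.varsBelow (j, K))) :
    DmultiK p q L Y ∈ supported ℚ (S.varsBelow (j, K + L)) := by
  induction L using Finsupp.induction_single_one with
  | zero => rwa [DmultiK_zero_apply, add_zero]
  | add_single L i ih =>
    rw [DmultiK_add_single_apply, ← add_assoc]
    exact S.totalD_mem_supported_varsBelow i ih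

theorem P_mem_supported_parametric (hS : S.orthonomic) (α : Fin n) :
    S.P α ∈ supported ℚ S.parametric :=
  mem_supported.2 fun _ hv _ hvu => (hS α _ (hvu ▸ hv)).1

theorem DmultiK_P_mem_supported_varsBelow (hS : S.orthonomic) (α : Fin n)
    (L : Fin p →₀ ℕ) : DmultiK p q L (S.P α) ∈ supported ℚ (S.varsBelow (S.ii α, S.JJ α + L)) :=
  S.DmultiK_mem_supported_varsBelow L <|
    mem_supported.2 fun _ hv _ hvu => (hS α _ (hvu ▸ hv)).2

theorem var_induction {C : JetVar p q → Prop} (inl : ∀ i, C (Sum.inl i))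
    (parametric : ∀ u, ¬ S.principal u → C (Sum.inr u))
    (principal : ∀ α L, (∀ v ∈ S.varsBelow (S.ii α, S.JJ α + L), C v) →
      C (Sum.inr (S.ii α, S.JJ α + L))) :
    ∀ v, C v := by
  rintro (i | u)
  · exact inl i
  induction u using S.rlt_wellFounded.induction with
  | _ u ih =>
    by_cases hu : S.principal u
    · obtain ⟨α, L, rfl⟩ := hu
      refine principal α L fun v hv => ?_
      rcases v with i | w
      exacts [inl i, ih w (hv w rfl)]
    · exact parametric u hu

open Classical in
/-- A principal derivative `u^{i^α}_{J^α + L}` is replaced by the substitution applied to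
`D_L P^α`, which only involves lower derivatives; by passivity the choice of `(α, L)` does not
matter. -/
noncomputable def substVarAux : Fin q × (Fin p →₀ ℕ) → JetRing p q :=
  S.rlt_wellFounded.fix fun u IH =>
    if h : S.principal u then
      aeval (Sum.elim (fun i => X (Sum.inl i)) fun w => if hw : S.rlt w u then IH w hw else 0)
        (DmultiK p q h.choose_spec.choose (S.P h.choose))
    else X (Sum.inr u)

noncomputable def substVar : JetVar p q → JetRing p q :=
  Sum.elim (fun i => X (Sum.inl i)) S.substVarAux

noncomputable def subst : JetRing p q →ₐ[ℚ] JetRing p q :=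
  aeval S.substVar

theorem subst_X (v : JetVar p q) : S.subst (X v) = S.substVar v :=
  aeval_X _ v

theorem substVar_inr_of_not_principal {u : Fin q × (Fin p →₀ ℕ)} (hu : ¬ S.principal u) :
    S.substVar (Sum.inr u) = X (Sum.inr u) := by
  rw [substVar, Sum.elim_inr, substVarAux, S.rlt_wellFounded.fix_eq, dif_neg hu]

theorem substVar_inr_principal (hS : S.orthonomic) (hpass : S.passive) (α : Fin n)
    (L : Fin p →₀ ℕ) :
    S.substVar (Sum.inr (S.ii α, S.JJ α + L)) = S.subst (DmultiK p q L (S.P α)) := by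
  classical
  have hu : S.principal (S.ii α, S.JJ α + L) := ⟨α, L, rfl⟩
  have hchoice := hu.choose_spec.choose_spec
  rw [substVar, Sum.elim_inr, substVarAux, S.rlt_wellFounded.fix_eq, dif_pos hu,
    hpass _ α _ L hchoice.symm, subst]
  refine aeval_eqOn_of_mem_supported (S.DmultiK_P_mem_supported_varsBelow hS α L) ?_
  rintro (i | w) hw
  · rfl
  · exact dif_pos (hw w rfl)

theorem X_inl_mem_supported_parametric (i : Fin p) :
    (X (Sum.inl i) : JetRing p q) ∈ supported ℚ S.parametric :=
  X_mem_supported.2 fun _ h => Sum.inl_ne_inr h |>.elim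

theorem substVar_mem_supported_parametric (hS : S.orthonomic) (hpass : S.passive) :
    ∀ v, S.substVar v ∈ supported ℚ S.parametric :=
  S.var_induction S.X_inl_mem_supported_parametric
    (fun u hu => by
      rw [S.substVar_inr_of_not_principal hu]
      exact X_mem_supported.2 fun w hw => Sum.inr_injective hw ▸ hu)
    (fun α L ih => by
      rw [S.substVar_inr_principal hS hpass]
      exact aeval_mem_of_mem_supported (S.DmultiK_P_mem_supported_varsBelow hS α L) ih)

theorem X_sub_substVar_mem_diffIdeal (hS : S.orthonomic) (hpass : S.passive) :
    ∀ v, X v - S.substVar v ∈ S.diffIdeal :=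
  S.var_induction (fun i => by rw [substVar, Sum.elim_inl, sub_self]; exact zero_mem _)
    (fun u hu => by rw [S.substVar_inr_of_not_principal hu, sub_self]; exact zero_mem _)
    (fun α L ih => by
      rw [S.substVar_inr_principal hS hpass, ← sub_add_sub_cancel _ (DmultiK p q L (S.P α))]
      refine add_mem (Ideal.subset_span ⟨α, L, ?_⟩)
        (sub_aeval_mem_of_mem_supported (S.DmultiK_P_mem_supported_varsBelow hS α L) ih)
      rw [map_sub, DmultiK_X_inr])

theorem subst_mem_supported_parametric (hS : S.orthonomic) (hpass : S.passive)
    (Y : JetRing p q) : S.subst Y ∈ supported ℚ S.parametric :=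
  aeval_mem_of_mem_supported (s := Set.univ) (by simp)
    fun v _ => S.substVar_mem_supported_parametric hS hpass v

theorem subst_eq_self {Y : JetRing p q} (hY : Y ∈ supported ℚ S.parametric) :
    S.subst Y = Y := by
  conv_rhs => rw [← aeval_X_left_apply Y]
  refine aeval_eqOn_of_mem_supported hY ?_
  rintro (i | u) hu
  · rfl
  · exact S.substVar_inr_of_not_principal (hu u rfl)

theorem sub_subst_mem_diffIdeal (hS : S.orthonomic) (hpass : S.passive) (Y : JetRing p q) :
    Y - S.subst Y ∈ S.diffIdeal :=
  sub_aeval_mem_of_mem_supported (s := Set.univ) (by simp)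
    fun v _ => S.X_sub_substVar_mem_diffIdeal hS hpass v

theorem diffIdeal_le_ker_subst (hS : S.orthonomic) (hpass : S.passive) :
    S.diffIdeal ≤ RingHom.ker S.subst := by
  refine Ideal.span_le.2 ?_
  rintro _ ⟨α, L, rfl⟩
  rw [SetLike.mem_coe, RingHom.mem_ker, map_sub, DmultiK_X_inr, map_sub, subst_X,
    S.substVar_inr_principal hS hpass, sub_self]

theorem red_eq_subst (hS : S.orthonomic) (hpass : S.passive) (Y : JetRing p q) :
    S.red Y = S.subst Y := by
  have hex : ∃ R, S.inB R ∧ Y - R ∈ S.diffIdeal :=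
    ⟨S.subst Y, S.inB_iff_mem_supported.2 (S.subst_mem_supported_parametric hS hpass Y),
      S.sub_subst_mem_diffIdeal hS hpass Y⟩
  rw [red, dif_pos hex]
  obtain ⟨hB, hI⟩ := hex.choose_spec
  -- `R - subst Y` lies in `B` (fixed by `subst`) and in the differential ideal (killed by it)
  have hdiff : hex.choose - S.subst Y ∈ S.diffIdeal := by
    simpa using S.diffIdeal.sub_mem (S.sub_subst_mem_diffIdeal hS hpass Y) hI
  rw [← sub_eq_zero, ← S.subst_eq_self (sub_mem (S.inB_iff_mem_supported.1 hB)
    (S.subst_mem_supported_parametric hS hpass Y))]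
  exact S.diffIdeal_le_ker_subst hS hpass hdiff

theorem totalD_mem_diffIdeal (i : Fin p) {Y : JetRing p q} (hY : Y ∈ S.diffIdeal) :
    totalD p q i Y ∈ S.diffIdeal := by
  induction hY using Submodule.span_induction with
  | mem _ h =>
    obtain ⟨α, L, rfl⟩ := h
    rw [← DmultiK_add_single_apply]
    exact Ideal.subset_span ⟨α, _, rfl⟩
  | zero => rw [map_zero]; exact zero_mem _
  | add _ _ _ _ hx hy => rw [map_add]; exact add_mem hx hy
  | smul a x hx ihx =>
    rw [smul_eq_mul, Derivation.leibniz, smul_eq_mul, smul_eq_mul]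
    exact add_mem (Ideal.mul_mem_left _ _ ihx) (Ideal.mul_mem_right _ _ hx)

theorem subst_totalD_subst (hS : S.orthonomic) (hpass : S.passive) (i : Fin p)
    (Y : JetRing p q) : S.subst (totalD p q i (S.subst Y)) = S.subst (totalD p q i Y) := by
  rw [← sub_eq_zero, ← map_sub, ← map_sub]
  exact S.diffIdeal_le_ker_subst hS hpass <| S.totalD_mem_diffIdeal i <| by
    simpa using S.diffIdeal.neg_mem (S.sub_subst_mem_diffIdeal hS hpass Y)

theorem subst_X_eq_P (hS : S.orthonomic) (hpass : S.passive) (α : Fin n) :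
    S.subst (X (Sum.inr (S.ii α, S.JJ α))) = S.P α := by
  have h := S.substVar_inr_principal hS hpass α 0
  rw [add_zero, DmultiK_zero_apply, S.subst_eq_self (S.P_mem_supported_parametric hS α)] at h
  rw [subst_X, h]

theorem not_principal_zero (j : Fin q) : ¬ S.principal (j, 0) := by
  rintro ⟨α, L, h⟩
  exact S.J_ne α (add_eq_zero.1 (Prod.mk.inj h).2.symm).1

theorem iprolong_X_of_not_principal (Q : Fin q → JetRing p q) {j : Fin q} {K : Fin p →₀ ℕ}
    (h : ¬ S.principal (j, K)) : S.iprolong Q (X (Sum.inr (j, K))) = S.dfrakK K (Q j) := by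
  classical
  rw [iprolong, mkDerivation_X]
  exact if_neg h

theorem iprolong_subst_X (hS : S.orthonomic) (hpass : S.passive) (Q : Fin q → JetRing p q)
    (hcomm : ∀ (i : Fin p) (P' : JetRing p q), S.inB P' →
      S.dfrak i (S.iprolong Q P') = S.iprolong Q (S.dfrak i P'))
    (j : Fin q) (K : Fin p →₀ ℕ) :
    S.iprolong Q (S.subst (X (Sum.inr (j, K)))) = S.subst (DmultiK p q K (Q j)) := by
  have hdfrak : ∀ i Y, S.dfrak i Y = S.subst (totalD p q i Y) := fun i Y =>
    S.red_eq_subst hS hpass _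
  induction K using Finsupp.induction_single_one with
  | zero =>
    rw [subst_X, S.substVar_inr_of_not_principal (S.not_principal_zero j),
      S.iprolong_X_of_not_principal Q (S.not_principal_zero j), dfrakK, S.red_eq_subst hS hpass]
  | add_single K i ih =>
    calc S.iprolong Q (S.subst (X (Sum.inr (j, K + Finsupp.single i 1))))
        = S.iprolong Q (S.dfrak i (S.subst (X (Sum.inr (j, K))))) := by
          rw [hdfrak, S.subst_totalD_subst hS hpass, totalD_X_inr]
      _ = S.dfrak i (S.iprolong Q (S.subst (X (Sum.inr (j, K))))) :=
          (hcomm i _ <| S.inB_iff_mem_supported.2 <|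
            S.subst_mem_supported_parametric hS hpass _).symm
      _ = S.subst (DmultiK p q (K + Finsupp.single i 1) (Q j)) := by
          rw [ih, hdfrak, S.subst_totalD_subst hS hpass, DmultiK_add_single_apply]

end OrthoSystem

theorem commute_implies_symmetry_general (S : OrthoSystem p q n)
    (hS : S.orthonomic) (hpass : S.passive)
    (Q : Fin q → JetRing p q)
    (hcomm : ∀ (j : Fin p) (P' : JetRing p q), S.inB P' →
      S.dfrak j (S.iprolong Q P') = S.iprolong Q (S.dfrak j P')) :
    ∀ α : Fin n, S.dfrakK (S.JJ α) (Q (S.ii α)) = S.iprolong Q (S.P α) := by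
  intro α
  rw [OrthoSystem.dfrakK, S.red_eq_subst hS hpass, ← S.subst_X_eq_P hS hpass α,
    S.iprolong_subst_X hS hpass Q hcomm]

/-- If `[𝔇_j, 𝔭𝔯_Q] = 0` on `B` for all `j = 1,…,p`, then `Q ∈ B^q` is a
generalized symmetry of the passive orthonomic system:
`𝔇_{J^α} Q^{i^α} = 𝔭𝔯_Q P^α` for all `α`. -/
theorem commute_implies_symmetry (S : OrthoSystem p q n)
    (hS : S.orthonomic) (hpass : S.passive)
    (Q : Fin q → JetRing p q) (hQ : ∀ j, S.inB (Q j))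
    (hcomm : ∀ (j : Fin p) (P' : JetRing p q), S.inB P' →
      S.dfrak j (S.iprolong Q P') = S.iprolong Q (S.dfrak j P')) :
    ∀ α : Fin n, S.dfrakK (S.JJ α) (Q (S.ii α)) = S.iprolong Q (S.P α) :=
  commute_implies_symmetry_general S hS hpass Q hcomm
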